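/- Let Ω ⊆ ℝ² be a bounded measurable set, let x ∈ Ω, and let s < t be real numbers. If g: Ω → ℝ is measurable and satisfies 0 ≤ g(y) ≤ (4π(t−s))^{−1} exp(−‖x−y‖²/(4(t−s))) for almost every y ∈ Ω, then ∫_Ω g(y) dy ≤ 1 − exp(−diam(Ω)²/(4(t−s))). -/

import Mathlib

open MeasureTheory Real

section Aux

local notation "E" => EuclideanSpace ℝ (Fin 2)

/-- Gaussian integral over a centered ball in the plane. -/
lemma gaussian_ball_integral (τ d : ℝ) (hτ : 0 < τ) (hd : 0 ≤ d) :
    ∫ z in Metric.closedBall (0 : E) d, (4 * π * τ)⁻¹ * Real.exp (-‖z‖ ^ 2 / (4 * τ)) =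
      1 - Real.exp (-d ^ 2 / (4 * τ)) := by
  set φ : ℝ → ℝ := fun r => (4 * π * τ)⁻¹ * Real.exp (-r ^ 2 / (4 * τ)) with hφ
  have h1 : ∫ z in Metric.closedBall (0 : E) d, φ ‖z‖ =
      ∫ z : E, Set.indicator (Set.Iic d) φ ‖z‖ := by
    rw [← integral_indicator (measurableSet_closedBall)]
    congr 1
    ext z
    by_cases hz : ‖z‖ ≤ d
    · rw [Set.indicator_of_mem (by simpa [Metric.mem_closedBall, dist_zero_right] using hz),
        Set.indicator_of_mem (by simpa using hz)]
    · rw [Set.indicator_of_notMem (by simpa [Metric.mem_closedBall, dist_zero_right] using hz),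
        Set.indicator_of_notMem (by simpa using hz)]
  have hdim : Module.finrank ℝ E = 2 := by
    simp [finrank_euclideanSpace]
  have h2 := MeasureTheory.integral_fun_norm_addHaar (volume : Measure E)
      (Set.indicator (Set.Iic d) φ)
  rw [hdim] at h2
  have hvol : (volume (Metric.ball (0 : E) 1)).toReal = π := by
    rw [EuclideanSpace.volume_ball]
    simp only [Real.sq_sqrt Real.pi_pos.le, Fintype.card_fin]
    rw [show ((2:ℕ):ℝ)/2 + 1 = 2 by norm_num, Real.Gamma_two]
    simp [Real.sq_sqrt Real.pi_pos.le, ENNReal.toReal_ofReal Real.pi_pos.le]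
  -- inner integral
  have h3 : ∫ r in Set.Ioi (0 : ℝ), r ^ (2 - 1) • Set.indicator (Set.Iic d) φ r =
      ∫ r in (0:ℝ)..d, r * φ r := by
    have : ∀ r : ℝ, r ^ (2 - 1) • Set.indicator (Set.Iic d) φ r =
        Set.indicator (Set.Iic d) (fun r => r * φ r) r := by
      intro r
      by_cases hr : r ∈ Set.Iic d
      · simp [Set.indicator_of_mem hr]
      · simp [Set.indicator_of_notMem hr]
    simp_rw [this]
    rw [integral_indicator measurableSet_Iic, Measure.restrict_restrict measurableSet_Iic,
      Set.Iic_inter_Ioi, intervalIntegral.integral_of_le hd]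
  have h4 : ∫ r in (0:ℝ)..d, r * φ r = (2 * π)⁻¹ * (1 - Real.exp (-d ^ 2 / (4 * τ))) := by
    have hderiv : ∀ r ∈ Set.uIcc (0:ℝ) d,
        HasDerivAt (fun r => -(2 * τ) * φ r) (r * φ r) r := by
      intro r _
      have h5 : HasDerivAt (fun r : ℝ => -r ^ 2 / (4 * τ)) (-r / (2 * τ)) r := by
        have := ((hasDerivAt_pow 2 r).neg).div_const (4 * τ)
        refine this.congr_deriv ?_
        have hτ0 : τ ≠ 0 := hτ.ne'
        field_simp
        ring
      have h6 := ((h5.exp.const_mul ((4 * π * τ)⁻¹)).const_mul (-(2 * τ)))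
      refine HasDerivAt.congr_deriv h6 ?_
      rw [hφ]
      field_simp
    rw [intervalIntegral.integral_eq_sub_of_hasDerivAt hderiv (by
      apply Continuous.intervalIntegrable
      continuity)]
    rw [hφ]
    simp only [neg_zero, zero_pow, mul_zero]
    rw [show -(0:ℝ)^2 / (4 * τ) = 0 by ring, Real.exp_zero]
    field_simp
    ring
  rw [h1, h2, h3, h4, measureReal_def, hvol]
  have hπ := Real.pi_pos
  simp only [smul_eq_mul, nsmul_eq_mul, Nat.cast_ofNat]
  field_simp

end Aux

/-- Dissipation estimate (2.3-8): if `0 ≤ g ≤ Γ(x,t;·,s)` a.e. on a bounded planar set `Ω`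
containing `x`, then `∫_Ω g ≤ 1 − exp(−diam(Ω)²/(4(t−s)))`. -/
theorem dissipation_estimate_kernel
    (Ω : Set (EuclideanSpace ℝ (Fin 2))) (hΩb : Bornology.IsBounded Ω)
    (hΩm : MeasurableSet Ω) (x : EuclideanSpace ℝ (Fin 2)) (hx : x ∈ Ω)
    (s t : ℝ) (hst : s < t) (g : EuclideanSpace ℝ (Fin 2) → ℝ) (hg : Measurable g)
    (hbound : ∀ᵐ y ∂(volume.restrict Ω),
      0 ≤ g y ∧ g y ≤ (4 * π * (t - s))⁻¹ * Real.exp (-‖x - y‖ ^ 2 / (4 * (t - s)))) :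
    (∫ y in Ω, g y) ≤ 1 - Real.exp (-(Metric.diam Ω) ^ 2 / (4 * (t - s))) := by
  set τ := t - s with hτdef
  have hτ : 0 < τ := sub_pos.mpr hst
  set d := Metric.diam Ω with hddef
  have hd : 0 ≤ d := Metric.diam_nonneg
  set Γx : EuclideanSpace ℝ (Fin 2) → ℝ :=
    fun y => (4 * π * τ)⁻¹ * Real.exp (-‖x - y‖ ^ 2 / (4 * τ)) with hΓx
  have hΓcont : Continuous Γx := by
    apply Continuous.mul continuous_const
    exact (((continuous_const.sub continuous_id).norm.pow 2).neg.div_const _).rexp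
  have hsub : Ω ⊆ Metric.closedBall x d :=
    fun y hy => Metric.mem_closedBall.mpr (Metric.dist_le_diam_of_mem hΩb hy hx)
  have hΓball : IntegrableOn Γx (Metric.closedBall x d) :=
    hΓcont.continuousOn.integrableOn_compact (isCompact_closedBall x d)
  have hΓΩ : IntegrableOn Γx Ω := hΓball.mono_set hsub
  have hgΩ : IntegrableOn g Ω := by
    refine Integrable.mono hΓΩ (hg.aestronglyMeasurable.restrict) ?_
    filter_upwards [hbound] with y hy
    rw [Real.norm_of_nonneg hy.1, Real.norm_of_nonneg (by positivity)]
    exact hy.2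
  have step1 : (∫ y in Ω, g y) ≤ ∫ y in Ω, Γx y :=
    integral_mono_ae hgΩ hΓΩ (hbound.mono fun y hy => hy.2)
  have step2 : (∫ y in Ω, Γx y) ≤ ∫ y in Metric.closedBall x d, Γx y := by
    refine setIntegral_mono_set hΓball ?_ (HasSubset.Subset.eventuallyLE hsub)
    filter_upwards with y
    positivity
  have step3 : (∫ y in Metric.closedBall x d, Γx y) = 1 - Real.exp (-d ^ 2 / (4 * τ)) := by
    have key : (∫ y in Metric.closedBall x d, Γx y) =
        ∫ z in Metric.closedBall (0 : EuclideanSpace ℝ (Fin 2)) d,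
          (4 * π * τ)⁻¹ * Real.exp (-‖z‖ ^ 2 / (4 * τ)) := by
      rw [← integral_indicator (measurableSet_closedBall),
        ← integral_indicator (measurableSet_closedBall)]
      rw [← integral_sub_left_eq_self
        (Set.indicator (Metric.closedBall (0 : EuclideanSpace ℝ (Fin 2)) d)
          (fun z => (4 * π * τ)⁻¹ * Real.exp (-‖z‖ ^ 2 / (4 * τ)))) volume x]
      congr 1
      ext y
      by_cases hy : y ∈ Metric.closedBall x d
      · rw [Set.indicator_of_mem hy, Set.indicator_of_mem (by
          rw [Metric.mem_closedBall, dist_zero_right]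
          rw [Metric.mem_closedBall, dist_comm, dist_eq_norm] at hy
          exact hy)]
      · rw [Set.indicator_of_notMem hy, Set.indicator_of_notMem (by
          rw [Metric.mem_closedBall, dist_zero_right]
          rw [Metric.mem_closedBall, dist_comm, dist_eq_norm] at hy
          exact hy)]
    rw [key, gaussian_ball_integral τ d hτ hd]
  calc (∫ y in Ω, g y) ≤ ∫ y in Metric.closedBall x d, Γx y := step1.trans step2
    _ = 1 - Real.exp (-d ^ 2 / (4 * τ)) := step3
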